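/- Let d ≥ 1, K ≥ 1 and b₁, …, b_K > 0, and define f : (ℝ^d)^K → ℝ by f(q₁, …, q_K) = Σ_{i=1}^K (−(bᵢ/2)·log(1 − |qᵢ|²/bᵢ)). Then for every q = (q₁, …, q_K) with |qᵢ| < √bᵢ for each i, f is twice continuously differentiable at q, and for every ξ = (ξ₁, …, ξ_K) ∈ (ℝ^d)^K the Hessian quadratic form of f at q satisfies D²f(q)[ξ, ξ] ≥ Σ_{i=1}^K |ξᵢ|². (This says Hess(−log M(q)) ≥ Id on D = ∏ᵢ B(0, √bᵢ) for the K-spring FENE Maxwellian M(q) = ∏ᵢ Mᵢ(qᵢ), i.e. the Bakry–Émery condition holds with κ = 1.) -/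

import Mathlib

/-!
The potential is a sum of FENE spring potentials `φ_b(x) = -(b/2) log (1 - ‖x‖²/b)`, each depending
on one block, so its Hessian is block diagonal. On a block, with `c = 1 - ‖x‖²/b ∈ (0, 1]`,
`D²φ_b(x)[v, v] = ‖v‖²/c + 2⟪x, v⟫²/(b c²)`: the first term is at least `‖v‖²` and the second is
nonnegative.
-/

open Real Metric RealInnerProductSpace ContinuousLinearMap

section
variable {𝕜 G E F : Type*} [NontriviallyNormedField 𝕜]
  [NormedAddCommGroup G] [NormedSpace 𝕜 G] [NormedAddCommGroup E] [NormedSpace 𝕜 E]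
  [NormedAddCommGroup F] [NormedSpace 𝕜 F]

theorem ContinuousLinearMap.iteratedFDeriv_comp_right_of_isOpen (g : G →L[𝕜] E) {f : E → F}
    {s : Set E} {n : WithTop ℕ∞} (hs : IsOpen s) (hf : ContDiffOn 𝕜 n f s) {x : G} (hx : g x ∈ s)
    {i : ℕ} (hi : i ≤ n) :
    iteratedFDeriv 𝕜 i (f ∘ g) x =
      (iteratedFDeriv 𝕜 i f (g x)).compContinuousLinearMap fun _ => g := by
  have hs' : IsOpen (g ⁻¹' s) := hs.preimage g.continuous
  rw [← iteratedFDerivWithin_of_isOpen i hs' hx, ← iteratedFDerivWithin_of_isOpen i hs hx]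
  exact g.iteratedFDerivWithin_comp_right hf hs.uniqueDiffOn hs'.uniqueDiffOn hx hi

theorem iteratedFDeriv_comp_proj_apply {ι : Type*} [Fintype ι] {f : E → F} {s : Set E}
    {n : WithTop ℕ∞} (hs : IsOpen s) (hf : ContDiffOn 𝕜 n f s) {p : ι → E} {i : ι}
    (hp : p i ∈ s) {k : ℕ} (hk : k ≤ n) (m : Fin k → ι → E) :
    iteratedFDeriv 𝕜 k (fun q : ι → E => f (q i)) p m = iteratedFDeriv 𝕜 k f (p i) (m · i) :=
  DFunLike.congr_fun
    ((proj (R := 𝕜) (φ := fun _ : ι => E) i).iteratedFDeriv_comp_right_of_isOpen hs hf hp hk) m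

end

variable {E : Type*} [NormedAddCommGroup E] {b : ℝ} {x : E}

noncomputable def fenePotential (b : ℝ) (x : E) : ℝ := -(b / 2) * log (1 - ‖x‖ ^ 2 / b)

theorem one_sub_norm_sq_div_pos (hb : 0 < b) (hx : x ∈ ball (0 : E) √b) :
    0 < 1 - ‖x‖ ^ 2 / b := by
  rw [mem_ball_zero_iff, lt_sqrt (norm_nonneg x)] at hx
  rw [sub_pos, div_lt_one hb]
  exact hx

variable [InnerProductSpace ℝ E]

theorem contDiffOn_fenePotential (hb : 0 < b) {n : WithTop ℕ∞} :
    ContDiffOn ℝ n (fenePotential b) (ball (0 : E) √b) := by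
  intro x hx
  have hc : ContDiffAt ℝ n (fun y : E => 1 - ‖y‖ ^ 2 / b) x :=
    (contDiff_const.sub ((contDiff_norm_sq ℝ).div_const b)).contDiffAt
  exact (contDiffAt_const.mul (hc.log (one_sub_norm_sq_div_pos hb hx).ne')).contDiffWithinAt

theorem hasFDerivAt_one_sub_norm_sq_div (b : ℝ) (x : E) :
    HasFDerivAt (fun y : E => 1 - ‖y‖ ^ 2 / b) (-(2 / b) • innerSL ℝ x) x := by
  have h := ((hasStrictFDerivAt_norm_sq x).hasFDerivAt.mul_const b⁻¹).const_sub 1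
  simp only [← div_eq_mul_inv] at h
  refine h.congr_fderiv ?_
  ext v
  simp only [neg_apply, smul_apply, innerSL_apply_apply, smul_eq_mul]
  ring

theorem hasFDerivAt_fenePotential (hb : 0 < b) (hx : x ∈ ball (0 : E) √b) :
    HasFDerivAt (fenePotential b) ((1 - ‖x‖ ^ 2 / b)⁻¹ • innerSL ℝ x) x := by
  have hc := one_sub_norm_sq_div_pos hb hx
  refine (((hasFDerivAt_one_sub_norm_sq_div b x).log hc.ne').const_mul (-(b / 2))).congr_fderiv ?_
  ext v
  simp only [smul_apply, coe_innerSL_apply, smul_eq_mul]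
  field_simp

theorem iteratedFDeriv_two_fenePotential (hb : 0 < b) (hx : x ∈ ball (0 : E) √b) (v : E) :
    iteratedFDeriv ℝ 2 (fenePotential b) x ![v, v] =
      ‖v‖ ^ 2 / (1 - ‖x‖ ^ 2 / b) + 2 * ⟪x, v⟫ ^ 2 / (b * (1 - ‖x‖ ^ 2 / b) ^ 2) := by
  have hgrad : fderiv ℝ (fenePotential b) =ᶠ[nhds x]
      fun y => (1 - ‖y‖ ^ 2 / b)⁻¹ • innerSL ℝ y := by
    filter_upwards [isOpen_ball.mem_nhds hx] with y hy
    exact (hasFDerivAt_fenePotential hb hy).fderiv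
  have hc := one_sub_norm_sq_div_pos hb hx
  have hder := ((hasDerivAt_inv hc.ne').comp_hasFDerivAt x
    (hasFDerivAt_one_sub_norm_sq_div b x)).fun_smul
    (innerSL ℝ (E := E)).hasFDerivAt
  simp only [Function.comp_apply] at hder
  rw [iteratedFDeriv_two_apply, hgrad.fderiv_eq, hder.fderiv]
  simp only [Matrix.cons_val_zero, Matrix.cons_val_one, add_apply, smul_apply, smulRight_apply,
    smul_eq_mul]
  -- `hder` sees `innerSL ℝ` as `ℝ`-linear rather than conjugate-linear, so only `erw` matches it.
  erw [innerSL_apply_apply, innerSL_apply_apply, real_inner_self_eq_norm_sq]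
  field_simp

theorem norm_sq_le_iteratedFDeriv_two_fenePotential (hb : 0 < b) (hx : x ∈ ball (0 : E) √b)
    (v : E) : ‖v‖ ^ 2 ≤ iteratedFDeriv ℝ 2 (fenePotential b) x ![v, v] := by
  have hc := one_sub_norm_sq_div_pos hb hx
  have hc1 : 1 - ‖x‖ ^ 2 / b ≤ 1 := sub_le_self 1 (by positivity)
  rw [iteratedFDeriv_two_fenePotential hb hx]
  have hfirst : ‖v‖ ^ 2 ≤ ‖v‖ ^ 2 / (1 - ‖x‖ ^ 2 / b) := le_div_self (sq_nonneg ‖v‖) hc hc1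
  have hsecond : 0 ≤ 2 * ⟪x, v⟫ ^ 2 / (b * (1 - ‖x‖ ^ 2 / b) ^ 2) := by positivity
  linarith

theorem stmt11_general (d K : ℕ) (bv : Fin K → ℝ) (hbv : ∀ i, 0 < bv i)
    (f : (Fin K → EuclideanSpace ℝ (Fin d)) → ℝ)
    (hf : ∀ q, f q = ∑ i : Fin K, -(bv i / 2) * Real.log (1 - ‖q i‖ ^ 2 / bv i))
    (q : Fin K → EuclideanSpace ℝ (Fin d)) (hq : ∀ i, ‖q i‖ < Real.sqrt (bv i)) :
    ContDiffAt ℝ 2 f q ∧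
    ∀ ξ : Fin K → EuclideanSpace ℝ (Fin d),
      ∑ i : Fin K, ‖ξ i‖ ^ 2 ≤ iteratedFDeriv ℝ 2 f q ![ξ, ξ] := by
  obtain rfl : f = fun p => ∑ i, fenePotential (bv i) (p i) := funext hf
  have hqi : ∀ i, q i ∈ ball 0 √(bv i) := fun i => mem_ball_zero_iff.2 (hq i)
  have hblock : ∀ i, ContDiffAt ℝ 2 (fun p : Fin K → EuclideanSpace ℝ (Fin d) =>
      fenePotential (bv i) (p i)) q := fun i =>
    ContDiffAt.comp (g := fenePotential (bv i)) q
      ((contDiffOn_fenePotential (hbv i)).contDiffAt (isOpen_ball.mem_nhds (hqi i)))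
      (contDiffAt_apply ℝ _ i q)
  refine ⟨ContDiffAt.sum fun i _ => hblock i, fun ξ => ?_⟩
  rw [iteratedFDeriv_fun_sum_apply fun i _ => hblock i, sum_apply]
  refine Finset.sum_le_sum fun i _ => ?_
  have hξ : (![ξ, ξ] · i) = ![ξ i, ξ i] := by
    funext j; fin_cases j <;> rfl
  rw [iteratedFDeriv_comp_proj_apply isOpen_ball (contDiffOn_fenePotential (hbv i)) (hqi i) le_rfl,
    hξ]
  exact norm_sq_le_iteratedFDeriv_two_fenePotential (hbv i) (hqi i) (ξ i)

theorem stmt11 (d K : ℕ) (hd : 1 ≤ d) (hK : 1 ≤ K)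
    (bv : Fin K → ℝ) (hbv : ∀ i, 0 < bv i)
    (f : (Fin K → EuclideanSpace ℝ (Fin d)) → ℝ)
    (hf : ∀ q, f q = ∑ i : Fin K, -(bv i / 2) * Real.log (1 - ‖q i‖ ^ 2 / bv i))
    (q : Fin K → EuclideanSpace ℝ (Fin d)) (hq : ∀ i, ‖q i‖ < Real.sqrt (bv i)) :
    ContDiffAt ℝ 2 f q ∧
    ∀ ξ : Fin K → EuclideanSpace ℝ (Fin d),
      ∑ i : Fin K, ‖ξ i‖ ^ 2 ≤ iteratedFDeriv ℝ 2 f q ![ξ, ξ] :=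
  stmt11_general d K bv hbv f hf q hq
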